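/- Fix an integer n ≥ 4. Let π_L : ℝ^{2n−1} → ℝⁿ×ℝⁿ and π_R : ℝ^{2n−1} → ℝ^{n−1}×ℝ^{n−1} be the two projections of the model folded cross cap canonical relation, and for m ∈ {n−1, n} let J_m be the (2m)×(2m) matrix of the standard symplectic bilinear form ω_m((u, μ), (v, ν)) = ⟨μ, v⟩ − ⟨u, ν⟩ on ℝ^m×ℝ^m. Then: (i) for every p ∈ ℝ^{2n−1}, Dπ_L(p)ᵀ J_n Dπ_L(p) = Dπ_R(p)ᵀ J_{n−1} Dπ_R(p) as antisymmetric (2n−1)×(2n−1) matrices (i.e. the pullbacks of the two canonical symplectic forms agree, expressing that C₀ is a canonical relation); and (ii) for p = (x, y_{n−1}, θ'') with θ₁ ≠ 0, this common antisymmetric matrix has rank 2n−2 if (x_{n−1}, x_n + y_{n−1}) ≠ (0, 0), and rank 2n−4 if x_{n−1} = 0 and x_n + y_{n−1} = 0. -/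

import Mathlib

/-- The phase space `T*ℝ^m ≅ ℝ^{2m}`, with coordinates `x_j` (the `Sum.inl` indices)
and `ξ_j` (the `Sum.inr` indices). -/
abbrev Phase (m : ℕ) := (Fin m ⊕ Fin m) → ℝ

/-- The standard symplectic bilinear form `ω((u, μ), (v, ν)) = ⟨μ, v⟩ - ⟨u, ν⟩`
(whose matrix is `J_m`). -/
noncomputable def sympForm (m : ℕ) : LinearMap.BilinForm ℝ (Phase m) :=
  LinearMap.mk₂ ℝ
    (fun z w => ∑ j : Fin m,
      (z (Sum.inr j) * w (Sum.inl j) - z (Sum.inl j) * w (Sum.inr j)))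
    (by
      intro m₁ m₂ w
      rw [← Finset.sum_add_distrib]
      exact Finset.sum_congr rfl fun j _ => by simp [Pi.add_apply]; ring)
    (by
      intro c m w
      rw [Finset.smul_sum]
      exact Finset.sum_congr rfl fun j _ => by simp [Pi.smul_apply, smul_eq_mul]; ring)
    (by
      intro m w₁ w₂
      rw [← Finset.sum_add_distrib]
      exact Finset.sum_congr rfl fun j _ => by simp [Pi.add_apply]; ring)
    (by
      intro c m w
      rw [Finset.smul_sum]
      exact Finset.sum_congr rfl fun j _ => by simp [Pi.smul_apply, smul_eq_mul]; ring)

/-- The left projection `π_L` of the model folded cross cap canonical relation, with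
values in `T*ℝⁿ ≅ ℝ^{2n}`.  Points of `ℝ^{2n-1}` are `(x, y_{n-1}, θ'')` with
`x = (x₁, …, x_n)` indexed by `0, …, n-1` and `θ'' = (θ₁, …, θ_{n-2})` indexed by
`0, …, n-3`. -/
noncomputable def piLs (n : ℕ) (hn : 4 ≤ n)
    (p : (Fin n → ℝ) × ℝ × (Fin (n - 2) → ℝ)) : Phase n :=
  Sum.elim p.1 fun i =>
    if h1 : (i : ℕ) = n - 2 then
      -2 * p.1 ⟨n - 2, by omega⟩ * p.2.1 * p.2.2 ⟨0, by omega⟩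
    else if h2 : (i : ℕ) = n - 1 then
      (p.2.1 ^ 2 + 2 * p.1 ⟨n - 1, by omega⟩ * p.2.1) * p.2.2 ⟨0, by omega⟩
    else p.2.2 ⟨(i : ℕ), by have := i.isLt; omega⟩

/-- The right projection `π_R` of the model folded cross cap canonical relation, with
values in `T*ℝ^{n-1} ≅ ℝ^{2(n-1)}`. -/
noncomputable def piRs (n : ℕ) (hn : 4 ≤ n)
    (p : (Fin n → ℝ) × ℝ × (Fin (n - 2) → ℝ)) : Phase (n - 1) :=
  Sum.elim
    (fun i =>
      if (i : ℕ) = 0 then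
        p.1 ⟨0, by omega⟩ +
          ((p.1 ⟨n - 1, by omega⟩) ^ 2 - (p.1 ⟨n - 2, by omega⟩) ^ 2) * p.2.1 +
          p.1 ⟨n - 1, by omega⟩ * p.2.1 ^ 2
      else if (i : ℕ) = n - 2 then p.2.1
      else p.1 ⟨(i : ℕ), lt_of_lt_of_le i.isLt (Nat.sub_le n 1)⟩)
    (fun i =>
      if h : (i : ℕ) = n - 2 then
        -(2 * p.1 ⟨n - 1, by omega⟩ * p.2.1 +
            (p.1 ⟨n - 1, by omega⟩) ^ 2 - (p.1 ⟨n - 2, by omega⟩) ^ 2) * p.2.2 ⟨0, by omega⟩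
      else p.2.2 ⟨(i : ℕ), by have := i.isLt; omega⟩)

namespace S11

/-- The source space `ℝ^{2n-1}` with `n = m+4`. -/
abbrev E (m : ℕ) := (Fin (m+4) → ℝ) × ℝ × (Fin (m+2) → ℝ)

variable (m : ℕ)

noncomputable def cX (j : Fin (m+4)) : E m →L[ℝ] ℝ :=
  (ContinuousLinearMap.proj j).comp
    (ContinuousLinearMap.fst ℝ (Fin (m+4) → ℝ) (ℝ × (Fin (m+2) → ℝ)))

noncomputable def cY : E m →L[ℝ] ℝ :=
  (ContinuousLinearMap.fst ℝ ℝ (Fin (m+2) → ℝ)).comp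
    (ContinuousLinearMap.snd ℝ (Fin (m+4) → ℝ) (ℝ × (Fin (m+2) → ℝ)))

noncomputable def cT (k : Fin (m+2)) : E m →L[ℝ] ℝ :=
  ((ContinuousLinearMap.proj k).comp (ContinuousLinearMap.snd ℝ ℝ (Fin (m+2) → ℝ))).comp
    (ContinuousLinearMap.snd ℝ (Fin (m+4) → ℝ) (ℝ × (Fin (m+2) → ℝ)))

@[simp] lemma cX_apply (j : Fin (m+4)) (p : E m) : cX m j p = p.1 j := rfl
@[simp] lemma cY_apply (p : E m) : cY m p = p.2.1 := rfl
@[simp] lemma cT_apply (k : Fin (m+2)) (p : E m) : cT m k p = p.2.2 k := rfl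

def aa (p : E m) : ℝ := p.1 ⟨m+2, by omega⟩
def bb (p : E m) : ℝ := p.1 ⟨m+3, by omega⟩
def yy (p : E m) : ℝ := p.2.1
def tt (p : E m) : ℝ := p.2.2 ⟨0, by omega⟩

/-- Explicit derivative of `piLs` at `p`. -/
noncomputable def dL (p : E m) : E m →L[ℝ] Phase (m+4) :=
  ContinuousLinearMap.pi (Sum.elim (fun j => cX m j)
    (fun j =>
      if h1 : (j:ℕ) = m+2 then
        (-2 * yy m p * tt m p) • cX m ⟨m+2, by omega⟩ + (-2 * aa m p * tt m p) • cY m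
          + (-2 * aa m p * yy m p) • cT m ⟨0, by omega⟩
      else if h2 : (j:ℕ) = m+3 then
        (2 * yy m p * tt m p) • cX m ⟨m+3, by omega⟩
          + (2 * tt m p * (yy m p + bb m p)) • cY m
          + (yy m p ^ 2 + 2 * bb m p * yy m p) • cT m ⟨0, by omega⟩
      else cT m ⟨(j:ℕ), by omega⟩))

lemma hasFDerivAt_piLs (hn : 4 ≤ m+4) (p : E m) :
    HasFDerivAt (piLs (m+4) hn) (dL m p) p := by
  rw [hasFDerivAt_pi']
  intro i
  rw [dL, ContinuousLinearMap.proj_pi]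
  cases i with
  | inl j =>
    simp only [Sum.elim_inl]
    exact (cX m j).hasFDerivAt
  | inr j =>
    simp only [Sum.elim_inr]
    by_cases h1 : (j:ℕ) = m+2
    · rw [dif_pos h1]
      have hf : (fun x : (Fin (m+4) → ℝ) × ℝ × (Fin (m+4-2) → ℝ) => piLs (m+4) hn x (Sum.inr j))
          = fun x => -2 * x.1 ⟨m+2, by omega⟩ * x.2.1 * x.2.2 ⟨0, by omega⟩ := by
        funext x
        show (Sum.elim x.1 _ (Sum.inr j)) = _
        simp only [Sum.elim_inr]
        rw [dif_pos (show (j:ℕ) = m+4-2 by omega)]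
        rfl
      rw [hf]
      have h := ((((cX m ⟨m+2, by omega⟩).hasFDerivAt (x := p)).const_mul
        (-2)).mul ((cY m).hasFDerivAt)).mul ((cT m ⟨0, by omega⟩).hasFDerivAt)
      refine h.congr_fderiv ?_
      refine ContinuousLinearMap.ext fun v => ?_
      simp only [ContinuousLinearMap.add_apply, ContinuousLinearMap.smul_apply,
        cX_apply, cY_apply, cT_apply, smul_eq_mul, aa, yy, tt, Pi.mul_apply]
      ring
    · by_cases h2 : (j:ℕ) = m+3
      · rw [dif_neg h1, dif_pos h2]
        have hf : (fun x : (Fin (m+4) → ℝ) × ℝ × (Fin (m+4-2) → ℝ) => piLs (m+4) hn x (Sum.inr j))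
            = fun x => (x.2.1 * x.2.1 + 2 * x.1 ⟨m+3, by omega⟩ * x.2.1) * x.2.2 ⟨0, by omega⟩ := by
          funext x
          show (Sum.elim x.1 _ (Sum.inr j)) = _
          simp only [Sum.elim_inr]
          rw [dif_neg (show ¬(j:ℕ) = m+4-2 by omega),
            dif_pos (show (j:ℕ) = m+4-1 by omega)]
          show (x.2.1 ^ 2 + 2 * x.1 ⟨m+3, by omega⟩ * x.2.1) * x.2.2 ⟨0, by omega⟩ = _
          ring
        rw [hf]
        have h := ((((cY m).hasFDerivAt (x := p)).mul ((cY m).hasFDerivAt)).add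
          ((((cX m ⟨m+3, by omega⟩).hasFDerivAt (x := p)).const_mul 2).mul
            ((cY m).hasFDerivAt))).mul ((cT m ⟨0, by omega⟩).hasFDerivAt)
        refine h.congr_fderiv ?_
        refine ContinuousLinearMap.ext fun v => ?_
        simp only [ContinuousLinearMap.add_apply, ContinuousLinearMap.smul_apply,
          cX_apply, cY_apply, cT_apply, smul_eq_mul, bb, yy, tt, Pi.mul_apply, Pi.add_apply]
        ring
      · rw [dif_neg h1, dif_neg h2]
        have hf : (fun x : (Fin (m+4) → ℝ) × ℝ × (Fin (m+4-2) → ℝ) => piLs (m+4) hn x (Sum.inr j))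
            = fun x => x.2.2 ⟨(j:ℕ), by omega⟩ := by
          funext x
          show (Sum.elim x.1 _ (Sum.inr j)) = _
          simp only [Sum.elim_inr]
          rw [dif_neg (show ¬(j:ℕ) = m+4-2 by omega),
            dif_neg (show ¬(j:ℕ) = m+4-1 by omega)]
        rw [hf]
        exact (cT m ⟨(j:ℕ), by omega⟩).hasFDerivAt

end S11
namespace S11
variable (m : ℕ)

/-- Explicit derivative of `piRs` at `p`. -/
noncomputable def dR (p : E m) : E m →L[ℝ] Phase (m+3) :=
  ContinuousLinearMap.pi (Sum.elim
    (fun i =>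
      if (i : ℕ) = 0 then
        cX m ⟨0, by omega⟩ + (-2 * aa m p * yy m p) • cX m ⟨m+2, by omega⟩
          + (2 * bb m p * yy m p + yy m p ^ 2) • cX m ⟨m+3, by omega⟩
          + (bb m p ^ 2 - aa m p ^ 2 + 2 * bb m p * yy m p) • cY m
      else if (i : ℕ) = m+2 then cY m
      else cX m ⟨(i : ℕ), by omega⟩)
    (fun i =>
      if h : (i : ℕ) = m+2 then
        (2 * aa m p * tt m p) • cX m ⟨m+2, by omega⟩
          + (-(2 * yy m p + 2 * bb m p) * tt m p) • cX m ⟨m+3, by omega⟩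
          + (-2 * bb m p * tt m p) • cY m
          + (-(2 * bb m p * yy m p + bb m p ^ 2 - aa m p ^ 2)) • cT m ⟨0, by omega⟩
      else cT m ⟨(i : ℕ), by omega⟩))

lemma hasFDerivAt_piRs (hn : 4 ≤ m+4) (p : E m) :
    HasFDerivAt (piRs (m+4) hn) (dR m p) p := by
  rw [hasFDerivAt_pi']
  intro i
  rw [dR, ContinuousLinearMap.proj_pi]
  cases i with
  | inl i =>
    simp only [Sum.elim_inl]
    by_cases h0 : (i : ℕ) = 0
    · rw [if_pos h0]
      have hf : (fun x : (Fin (m+4) → ℝ) × ℝ × (Fin (m+4-2) → ℝ) => piRs (m+4) hn x (Sum.inl i))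
          = fun x => x.1 ⟨0, by omega⟩
              + (x.1 ⟨m+3, by omega⟩ * x.1 ⟨m+3, by omega⟩
                  - x.1 ⟨m+2, by omega⟩ * x.1 ⟨m+2, by omega⟩) * x.2.1
              + x.1 ⟨m+3, by omega⟩ * (x.2.1 * x.2.1) := by
        funext x
        show (Sum.elim _ _ (Sum.inl i)) = _
        simp only [Sum.elim_inl]
        rw [if_pos h0]
        show x.1 ⟨0, by omega⟩ + ((x.1 ⟨m+3, by omega⟩) ^ 2 - (x.1 ⟨m+2, by omega⟩) ^ 2) * x.2.1
            + x.1 ⟨m+3, by omega⟩ * x.2.1 ^ 2 = _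
        ring
      rw [hf]
      have hb := (cX m ⟨m+3, by omega⟩).hasFDerivAt (x := p)
      have ha := (cX m ⟨m+2, by omega⟩).hasFDerivAt (x := p)
      have hy := (cY m).hasFDerivAt (x := p)
      have h := (((cX m ⟨0, by omega⟩).hasFDerivAt (x := p)).add
        (((hb.mul hb).sub (ha.mul ha)).mul hy)).add (hb.mul (hy.mul hy))
      refine h.congr_fderiv ?_
      refine ContinuousLinearMap.ext fun v => ?_
      simp only [ContinuousLinearMap.add_apply, ContinuousLinearMap.sub_apply,
        ContinuousLinearMap.smul_apply, cX_apply, cY_apply, cT_apply, smul_eq_mul,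
        aa, bb, yy, tt, Pi.mul_apply, Pi.add_apply, Pi.sub_apply]
      ring
    · by_cases h2 : (i : ℕ) = m+2
      · rw [if_neg h0, if_pos h2]
        have hf : (fun x : (Fin (m+4) → ℝ) × ℝ × (Fin (m+4-2) → ℝ) => piRs (m+4) hn x (Sum.inl i))
            = fun x => x.2.1 := by
          funext x
          show (Sum.elim _ _ (Sum.inl i)) = _
          simp only [Sum.elim_inl]
          rw [if_neg h0, if_pos (show (i : ℕ) = m+4-2 by omega)]
        rw [hf]
        exact (cY m).hasFDerivAt
      · rw [if_neg h0, if_neg h2]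
        have hf : (fun x : (Fin (m+4) → ℝ) × ℝ × (Fin (m+4-2) → ℝ) => piRs (m+4) hn x (Sum.inl i))
            = fun x => x.1 ⟨(i : ℕ), by omega⟩ := by
          funext x
          show (Sum.elim _ _ (Sum.inl i)) = _
          simp only [Sum.elim_inl]
          rw [if_neg h0, if_neg (show ¬(i : ℕ) = m+4-2 by omega)]
        rw [hf]
        exact (cX m ⟨(i : ℕ), by omega⟩).hasFDerivAt
  | inr i =>
    simp only [Sum.elim_inr]
    by_cases h2 : (i : ℕ) = m+2
    · rw [dif_pos h2]
      have hf : (fun x : (Fin (m+4) → ℝ) × ℝ × (Fin (m+4-2) → ℝ) => piRs (m+4) hn x (Sum.inr i))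
          = fun x => -(2 * x.1 ⟨m+3, by omega⟩ * x.2.1
              + x.1 ⟨m+3, by omega⟩ * x.1 ⟨m+3, by omega⟩
              - x.1 ⟨m+2, by omega⟩ * x.1 ⟨m+2, by omega⟩) * x.2.2 ⟨0, by omega⟩ := by
        funext x
        show (Sum.elim _ _ (Sum.inr i)) = _
        simp only [Sum.elim_inr]
        rw [dif_pos (show (i : ℕ) = m+4-2 by omega)]
        show -(2 * x.1 ⟨m+3, by omega⟩ * x.2.1 + (x.1 ⟨m+3, by omega⟩) ^ 2
            - (x.1 ⟨m+2, by omega⟩) ^ 2) * x.2.2 ⟨0, by omega⟩ = _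
        ring
      rw [hf]
      have hb := (cX m ⟨m+3, by omega⟩).hasFDerivAt (x := p)
      have ha := (cX m ⟨m+2, by omega⟩).hasFDerivAt (x := p)
      have hy := (cY m).hasFDerivAt (x := p)
      have ht := (cT m ⟨0, by omega⟩).hasFDerivAt (x := p)
      have h := ((((hb.const_mul 2).mul hy).add (hb.mul hb)).sub (ha.mul ha)).neg.mul ht
      refine h.congr_fderiv ?_
      refine ContinuousLinearMap.ext fun v => ?_
      simp only [ContinuousLinearMap.add_apply, ContinuousLinearMap.sub_apply,
        ContinuousLinearMap.neg_apply, ContinuousLinearMap.smul_apply, cX_apply, cY_apply,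
        cT_apply, smul_eq_mul, aa, bb, yy, tt, Pi.mul_apply, Pi.add_apply, Pi.sub_apply,
        Pi.neg_apply]
      ring
    · rw [dif_neg h2]
      have hf : (fun x : (Fin (m+4) → ℝ) × ℝ × (Fin (m+4-2) → ℝ) => piRs (m+4) hn x (Sum.inr i))
          = fun x => x.2.2 ⟨(i : ℕ), by omega⟩ := by
        funext x
        show (Sum.elim _ _ (Sum.inr i)) = _
        simp only [Sum.elim_inr]
        rw [dif_neg (show ¬(i : ℕ) = m+4-2 by omega)]
      rw [hf]
      exact (cT m ⟨(i : ℕ), by omega⟩).hasFDerivAt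

end S11
namespace S11
variable (m : ℕ)

def D2 (p u : E m) : ℝ :=
  -2 * yy m p * tt m p * u.1 ⟨m+2, by omega⟩ + -2 * aa m p * tt m p * u.2.1
    + -2 * aa m p * yy m p * u.2.2 ⟨0, by omega⟩

def D3 (p u : E m) : ℝ :=
  2 * yy m p * tt m p * u.1 ⟨m+3, by omega⟩ + 2 * tt m p * (yy m p + bb m p) * u.2.1
    + (yy m p ^ 2 + 2 * bb m p * yy m p) * u.2.2 ⟨0, by omega⟩

def D0 (p u : E m) : ℝ :=
  u.1 ⟨0, by omega⟩ + -2 * aa m p * yy m p * u.1 ⟨m+2, by omega⟩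
    + (2 * bb m p * yy m p + yy m p ^ 2) * u.1 ⟨m+3, by omega⟩
    + (bb m p ^ 2 - aa m p ^ 2 + 2 * bb m p * yy m p) * u.2.1

def DE (p u : E m) : ℝ :=
  2 * aa m p * tt m p * u.1 ⟨m+2, by omega⟩
    + -(2 * yy m p + 2 * bb m p) * tt m p * u.1 ⟨m+3, by omega⟩
    + -2 * bb m p * tt m p * u.2.1
    + -(2 * bb m p * yy m p + bb m p ^ 2 - aa m p ^ 2) * u.2.2 ⟨0, by omega⟩

@[simp] lemma dL_inl (p w : E m) (j : Fin (m+4)) : dL m p w (Sum.inl j) = w.1 j := rfl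

lemma dL_inr (p w : E m) (j : Fin (m+4)) :
    dL m p w (Sum.inr j) =
      if h1 : (j : ℕ) = m+2 then D2 m p w
      else if h2 : (j : ℕ) = m+3 then D3 m p w
      else w.2.2 ⟨(j : ℕ), by omega⟩ := by
  simp only [dL, ContinuousLinearMap.pi_apply, Sum.elim_inr]
  by_cases h1 : (j : ℕ) = m+2
  · rw [dif_pos h1, dif_pos h1]
    simp [D2, mul_comm, mul_assoc, mul_left_comm]
  · by_cases h2 : (j : ℕ) = m+3
    · rw [dif_neg h1, dif_neg h1, dif_pos h2, dif_pos h2]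
      simp [D3, mul_comm, mul_assoc, mul_left_comm]
    · rw [dif_neg h1, dif_neg h1, dif_neg h2, dif_neg h2]
      rfl

lemma dR_inl (p w : E m) (i : Fin (m+3)) :
    dR m p w (Sum.inl i) =
      if h0 : (i : ℕ) = 0 then D0 m p w
      else if h2 : (i : ℕ) = m+2 then w.2.1
      else w.1 ⟨(i : ℕ), by omega⟩ := by
  simp only [dR, ContinuousLinearMap.pi_apply, Sum.elim_inl]
  by_cases h0 : (i : ℕ) = 0
  · rw [if_pos h0, dif_pos h0]
    simp [D0, mul_comm, mul_assoc, mul_left_comm]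
  · by_cases h2 : (i : ℕ) = m+2
    · rw [if_neg h0, dif_neg h0, if_pos h2, dif_pos h2]
      rfl
    · rw [if_neg h0, dif_neg h0, if_neg h2, dif_neg h2]
      rfl

lemma dR_inr (p w : E m) (i : Fin (m+3)) :
    dR m p w (Sum.inr i) =
      if h2 : (i : ℕ) = m+2 then DE m p w
      else w.2.2 ⟨(i : ℕ), by omega⟩ := by
  simp only [dR, ContinuousLinearMap.pi_apply, Sum.elim_inr]
  by_cases h2 : (i : ℕ) = m+2
  · rw [dif_pos h2, dif_pos h2]
    simp [DE, mul_comm, mul_assoc, mul_left_comm]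
  · rw [dif_neg h2, dif_neg h2]
    rfl

lemma Bform (hn : 4 ≤ m+4) (p u v : E m) :
    (sympForm (m+4)).compl₁₂ (fderiv ℝ (piLs (m+4) hn) p).toLinearMap
        (fderiv ℝ (piLs (m+4) hn) p).toLinearMap u v =
      (∑ j : Fin (m+2),
          (u.2.2 j * v.1 ⟨(j : ℕ), by omega⟩ - u.1 ⟨(j : ℕ), by omega⟩ * v.2.2 j))
        + (D2 m p u * v.1 ⟨m+2, by omega⟩ - u.1 ⟨m+2, by omega⟩ * D2 m p v)
        + (D3 m p u * v.1 ⟨m+3, by omega⟩ - u.1 ⟨m+3, by omega⟩ * D3 m p v) := by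
  have hgen : ∀ j : Fin (m+2),
      dL m p u (Sum.inr (⟨(j : ℕ), by omega⟩ : Fin (m+4)))
          * dL m p v (Sum.inl (⟨(j : ℕ), by omega⟩ : Fin (m+4)))
        - dL m p u (Sum.inl (⟨(j : ℕ), by omega⟩ : Fin (m+4)))
          * dL m p v (Sum.inr (⟨(j : ℕ), by omega⟩ : Fin (m+4)))
      = u.2.2 j * v.1 ⟨(j : ℕ), by omega⟩ - u.1 ⟨(j : ℕ), by omega⟩ * v.2.2 j := by
    intro j
    have l1 : ¬((j : ℕ) = m+2) := by omega
    have l2 : ¬((j : ℕ) = m+3) := by omega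
    rw [dL_inr, dL_inr]
    simp only [dL_inl]
    simp [l1, l2, Fin.eta]
  have h2t :
      dL m p u (Sum.inr (⟨m+2, by omega⟩ : Fin (m+4)))
          * dL m p v (Sum.inl (⟨m+2, by omega⟩ : Fin (m+4)))
        - dL m p u (Sum.inl (⟨m+2, by omega⟩ : Fin (m+4)))
          * dL m p v (Sum.inr (⟨m+2, by omega⟩ : Fin (m+4)))
      = D2 m p u * v.1 ⟨m+2, by omega⟩ - u.1 ⟨m+2, by omega⟩ * D2 m p v := by
    rw [dL_inr, dL_inr]
    simp only [dL_inl]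
    simp
  have h3t :
      dL m p u (Sum.inr (⟨m+3, by omega⟩ : Fin (m+4)))
          * dL m p v (Sum.inl (⟨m+3, by omega⟩ : Fin (m+4)))
        - dL m p u (Sum.inl (⟨m+3, by omega⟩ : Fin (m+4)))
          * dL m p v (Sum.inr (⟨m+3, by omega⟩ : Fin (m+4)))
      = D3 m p u * v.1 ⟨m+3, by omega⟩ - u.1 ⟨m+3, by omega⟩ * D3 m p v := by
    rw [dL_inr, dL_inr]
    simp only [dL_inl]
    simp [show ¬(m+3 = m+2) by omega]
  rw [(hasFDerivAt_piLs m hn p).fderiv]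
  simp only [LinearMap.compl₁₂_apply, ContinuousLinearMap.coe_coe, sympForm,
    LinearMap.mk₂_apply]
  rw [Fin.sum_univ_castSucc, Fin.sum_univ_castSucc]
  exact congrArg₂ HAdd.hAdd (congrArg₂ HAdd.hAdd
    (Finset.sum_congr rfl fun j _ => hgen j) h2t) h3t

lemma Rform (hn : 4 ≤ m+4) (p u v : E m) :
    (sympForm (m+3)).compl₁₂ (fderiv ℝ (piRs (m+4) hn) p).toLinearMap
        (fderiv ℝ (piRs (m+4) hn) p).toLinearMap u v =
      ((u.2.2 ⟨0, by omega⟩ * D0 m p v - D0 m p u * v.2.2 ⟨0, by omega⟩)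
        + ∑ j : Fin (m+1),
          (u.2.2 ⟨(j : ℕ)+1, by omega⟩ * v.1 ⟨(j : ℕ)+1, by omega⟩
            - u.1 ⟨(j : ℕ)+1, by omega⟩ * v.2.2 ⟨(j : ℕ)+1, by omega⟩))
        + (DE m p u * v.2.1 - u.2.1 * DE m p v) := by
  have h0t :
      dR m p u (Sum.inr (⟨0, by omega⟩ : Fin (m+3)))
          * dR m p v (Sum.inl (⟨0, by omega⟩ : Fin (m+3)))
        - dR m p u (Sum.inl (⟨0, by omega⟩ : Fin (m+3)))
          * dR m p v (Sum.inr (⟨0, by omega⟩ : Fin (m+3)))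
      = u.2.2 ⟨0, by omega⟩ * D0 m p v - D0 m p u * v.2.2 ⟨0, by omega⟩ := by
    rw [dR_inr, dR_inr, dR_inl, dR_inl]
    simp [show ¬((0:ℕ) = m+2) by omega]
  have hgen : ∀ j : Fin (m+1),
      dR m p u (Sum.inr (⟨(j : ℕ)+1, by omega⟩ : Fin (m+3)))
          * dR m p v (Sum.inl (⟨(j : ℕ)+1, by omega⟩ : Fin (m+3)))
        - dR m p u (Sum.inl (⟨(j : ℕ)+1, by omega⟩ : Fin (m+3)))
          * dR m p v (Sum.inr (⟨(j : ℕ)+1, by omega⟩ : Fin (m+3)))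
      = u.2.2 ⟨(j : ℕ)+1, by omega⟩ * v.1 ⟨(j : ℕ)+1, by omega⟩
          - u.1 ⟨(j : ℕ)+1, by omega⟩ * v.2.2 ⟨(j : ℕ)+1, by omega⟩ := by
    intro j
    have l1 : ¬((j : ℕ) + 1 = m+2) := by omega
    have l2 : ¬((j : ℕ) + 1 = 0) := by omega
    have l3 : ¬((j : ℕ) = m+1) := by omega
    rw [dR_inr, dR_inr, dR_inl, dR_inl]
    simp [l1, l2, l3]
  have hEt :
      dR m p u (Sum.inr (⟨m+2, by omega⟩ : Fin (m+3)))
          * dR m p v (Sum.inl (⟨m+2, by omega⟩ : Fin (m+3)))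
        - dR m p u (Sum.inl (⟨m+2, by omega⟩ : Fin (m+3)))
          * dR m p v (Sum.inr (⟨m+2, by omega⟩ : Fin (m+3)))
      = DE m p u * v.2.1 - u.2.1 * DE m p v := by
    rw [dR_inr, dR_inr, dR_inl, dR_inl]
    simp [show ¬(m+2 = 0) by omega]
  rw [(hasFDerivAt_piRs m hn p).fderiv]
  simp only [LinearMap.compl₁₂_apply, ContinuousLinearMap.coe_coe, sympForm,
    LinearMap.mk₂_apply]
  rw [Fin.sum_univ_castSucc, Fin.sum_univ_succ]
  exact congrArg₂ HAdd.hAdd (congrArg₂ HAdd.hAdd h0t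
    (Finset.sum_congr rfl fun j _ => hgen j)) hEt

lemma formsAgree (hn : 4 ≤ m+4) (p u v : E m) :
    (sympForm (m+4)).compl₁₂ (fderiv ℝ (piLs (m+4) hn) p).toLinearMap
        (fderiv ℝ (piLs (m+4) hn) p).toLinearMap u v =
      (sympForm (m+3)).compl₁₂ (fderiv ℝ (piRs (m+4) hn) p).toLinearMap
        (fderiv ℝ (piRs (m+4) hn) p).toLinearMap u v := by
  rw [Bform, Rform]
  rw [Fin.sum_univ_succ]
  have hsum : (∑ j : Fin (m+1),
      (u.2.2 (Fin.succ j) * v.1 ⟨((Fin.succ j : Fin (m+2)) : ℕ), by omega⟩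
        - u.1 ⟨((Fin.succ j : Fin (m+2)) : ℕ), by omega⟩ * v.2.2 (Fin.succ j)))
      = ∑ j : Fin (m+1),
        (u.2.2 ⟨(j : ℕ)+1, by omega⟩ * v.1 ⟨(j : ℕ)+1, by omega⟩
          - u.1 ⟨(j : ℕ)+1, by omega⟩ * v.2.2 ⟨(j : ℕ)+1, by omega⟩) := by
    refine Finset.sum_congr rfl fun j _ => ?_
    simp only [Fin.val_succ]
    rfl
  rw [hsum]
  have e0 : (⟨0, by omega⟩ : Fin (m+2)) = 0 := rfl
  simp only [D2, D3, D0, DE, aa, bb, yy, tt, Fin.val_zero, e0]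
  ring

lemma skew (k : ℕ) (z w : Phase k) : sympForm k z w = -sympForm k w z := by
  simp only [sympForm, LinearMap.mk₂_apply, ← Finset.sum_neg_distrib]
  exact Finset.sum_congr rfl fun j _ => by ring

end S11
namespace S11
variable (m : ℕ)

def xvec (c r s : ℝ) : Fin (m+4) → ℝ := fun j =>
  if (j : ℕ) = 0 then c else if (j : ℕ) = m+2 then r else if (j : ℕ) = m+3 then s else 0

def kv (c r s μ : ℝ) : E m := (xvec m c r s, μ, 0)

@[simp] lemma xvec_at0 (c r s : ℝ) (h : 0 < m+4) : xvec m c r s ⟨0, h⟩ = c := by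
  simp [xvec]

@[simp] lemma xvec_atm2 (c r s : ℝ) (h : m+2 < m+4) : xvec m c r s ⟨m+2, h⟩ = r := by
  simp [xvec, show ¬(m+2 = 0) by omega]

@[simp] lemma xvec_atm3 (c r s : ℝ) (h : m+3 < m+4) : xvec m c r s ⟨m+3, h⟩ = s := by
  simp [xvec, show ¬(m+3 = 0) by omega, show ¬(m+3 = m+2) by omega]

lemma xvec_other (c r s : ℝ) (j : Fin (m+4)) (h0 : (j:ℕ) ≠ 0) (h2 : (j:ℕ) ≠ m+2)
    (h3 : (j:ℕ) ≠ m+3) : xvec m c r s j = 0 := by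
  simp [xvec, h0, h2, h3]

/-- Evaluation of the pulled-back form on a kernel-candidate vector. -/
lemma BV (hn : 4 ≤ m+4) (p : E m) (c r s μ : ℝ) (w : E m) :
    (sympForm (m+4)).compl₁₂ (fderiv ℝ (piLs (m+4) hn) p).toLinearMap
        (fderiv ℝ (piLs (m+4) hn) p).toLinearMap (kv m c r s μ) w =
      (-c + 2*aa m p*yy m p*r - (yy m p^2 + 2*bb m p*yy m p)*s) * w.2.2 ⟨0, by omega⟩
      + (-2*aa m p*tt m p*μ) * w.1 ⟨m+2, by omega⟩
      + (2*tt m p*(yy m p + bb m p)*μ) * w.1 ⟨m+3, by omega⟩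
      + (2*aa m p*tt m p*r - 2*(yy m p+bb m p)*tt m p*s) * w.2.1 := by
  rw [Bform]
  have hs : (∑ j : Fin (m+2),
      ((kv m c r s μ).2.2 j * w.1 ⟨(j : ℕ), by omega⟩
        - (kv m c r s μ).1 ⟨(j : ℕ), by omega⟩ * w.2.2 j))
      = -c * w.2.2 ⟨0, by omega⟩ := by
    rw [Finset.sum_eq_single (⟨0, by omega⟩ : Fin (m+2))]
    · simp [kv, xvec]
    · intro j _ hj
      have h0 : (j : ℕ) ≠ 0 := fun h => hj (by ext; simpa using h)
      have := j.isLt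
      simp [kv, xvec, h0, show ¬((j:ℕ) = m+2) by omega, show ¬((j:ℕ) = m+3) by omega]
    · intro h
      exact absurd (Finset.mem_univ _) h
  rw [hs]
  simp only [D2, D3, kv]
  simp only [xvec_atm2, xvec_atm3, Pi.zero_apply]
  ring

/-- The linear equations satisfied by any kernel element. -/
lemma ker_eqs (hn : 4 ≤ m+4) (p v : E m)
    (hv : ∀ w : E m, (sympForm (m+4)).compl₁₂ (fderiv ℝ (piLs (m+4) hn) p).toLinearMap
        (fderiv ℝ (piLs (m+4) hn) p).toLinearMap v w = 0) :
    (∀ j : Fin (m+2), v.2.2 j = 0) ∧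
    (∀ k : Fin (m+2), (k : ℕ) ≠ 0 → v.1 ⟨(k : ℕ), by omega⟩ = 0) ∧
    (v.1 ⟨0, by omega⟩ = 2*aa m p*yy m p*v.1 ⟨m+2, by omega⟩
        - (yy m p^2 + 2*bb m p*yy m p)*v.1 ⟨m+3, by omega⟩) ∧
    (aa m p * tt m p * v.2.1 + aa m p * yy m p * v.2.2 ⟨0, by omega⟩ = 0) ∧
    (2*tt m p*(yy m p + bb m p) * v.2.1
        + (yy m p^2 + 2*bb m p*yy m p) * v.2.2 ⟨0, by omega⟩ = 0) ∧
    (aa m p * tt m p * v.1 ⟨m+2, by omega⟩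
        - (yy m p + bb m p) * tt m p * v.1 ⟨m+3, by omega⟩ = 0) := by
  have hx : ∀ k : Fin (m+2), v.2.2 k = 0 := by
    intro k
    have h := hv (((Pi.single (⟨(k : ℕ), by omega⟩ : Fin (m+4)) (1:ℝ) : Fin (m+4) → ℝ), 0, 0) : E m)
    rw [Bform] at h
    dsimp only at h
    simp only [Pi.zero_apply] at h
    have e2 : (Pi.single (⟨(k : ℕ), by omega⟩ : Fin (m+4)) (1:ℝ) : Fin (m+4) → ℝ) ⟨m+2, by omega⟩ = 0 :=
      Pi.single_eq_of_ne (by simp only [ne_eq, Fin.mk.injEq]; omega) _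
    have e3 : (Pi.single (⟨(k : ℕ), by omega⟩ : Fin (m+4)) (1:ℝ) : Fin (m+4) → ℝ) ⟨m+3, by omega⟩ = 0 :=
      Pi.single_eq_of_ne (by simp only [ne_eq, Fin.mk.injEq]; omega) _
    have hs : (∑ j : Fin (m+2),
        (v.2.2 j * (Pi.single (⟨(k : ℕ), by omega⟩ : Fin (m+4)) (1:ℝ) : Fin (m+4) → ℝ) ⟨(j : ℕ), by omega⟩
          - v.1 ⟨(j : ℕ), by omega⟩ * (0:ℝ))) = v.2.2 k := by
      rw [Finset.sum_eq_single k]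
      · simp [Pi.single_eq_same]
      · intro j _ hj
        have hne : (⟨(j : ℕ), by omega⟩ : Fin (m+4)) ≠ ⟨(k : ℕ), by omega⟩ := by
          simp only [ne_eq, Fin.mk.injEq]
          exact fun h => hj (by ext; simpa using h)
        simp [Pi.single_eq_of_ne hne]
      · intro h
        exact absurd (Finset.mem_univ _) h
    rw [hs] at h
    simp only [D2, D3, e2, e3, Pi.zero_apply, mul_zero, zero_mul, add_zero, zero_add,
      sub_zero, zero_sub] at h
    linarith [h]
  have hθ : ∀ k : Fin (m+2),
      v.1 ⟨(k : ℕ), by omega⟩ = (2*aa m p*yy m p*v.1 ⟨m+2, by omega⟩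
        - (yy m p^2 + 2*bb m p*yy m p)*v.1 ⟨m+3, by omega⟩)
          * ((Pi.single k (1:ℝ) : Fin (m+2) → ℝ) ⟨0, by omega⟩) := by
    intro k
    have h := hv ((0, 0, (Pi.single k (1:ℝ) : Fin (m+2) → ℝ)) : E m)
    rw [Bform] at h
    dsimp only at h
    simp only [Pi.zero_apply] at h
    have hs : (∑ j : Fin (m+2),
        (v.2.2 j * (0:ℝ) - v.1 ⟨(j : ℕ), by omega⟩ * (Pi.single k (1:ℝ) : Fin (m+2) → ℝ) j))
        = -v.1 ⟨(k : ℕ), by omega⟩ := by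
      rw [Finset.sum_eq_single k]
      · simp [Pi.single_eq_same]
      · intro j _ hj
        simp [Pi.single_eq_of_ne hj]
      · intro h
        exact absurd (Finset.mem_univ _) h
    rw [hs] at h
    simp only [D2, D3, Pi.zero_apply, mul_zero, zero_mul, add_zero, zero_add,
      sub_zero, zero_sub] at h
    linarith [h]
  have hm2 : aa m p * tt m p * v.2.1 + aa m p * yy m p * v.2.2 ⟨0, by omega⟩ = 0 := by
    have h := hv (((Pi.single (⟨m+2, by omega⟩ : Fin (m+4)) (1:ℝ) : Fin (m+4) → ℝ), 0, 0) : E m)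
    rw [Bform] at h
    dsimp only at h
    simp only [Pi.zero_apply] at h
    have e2 : (Pi.single (⟨m+2, by omega⟩ : Fin (m+4)) (1:ℝ) : Fin (m+4) → ℝ) ⟨m+2, by omega⟩ = 1 :=
      Pi.single_eq_same _ _
    have e3 : (Pi.single (⟨m+2, by omega⟩ : Fin (m+4)) (1:ℝ) : Fin (m+4) → ℝ) ⟨m+3, by omega⟩ = 0 :=
      Pi.single_eq_of_ne (by simp only [ne_eq, Fin.mk.injEq]; omega) _
    have hs : (∑ j : Fin (m+2),
        (v.2.2 j * (Pi.single (⟨m+2, by omega⟩ : Fin (m+4)) (1:ℝ) : Fin (m+4) → ℝ) ⟨(j : ℕ), by omega⟩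
          - v.1 ⟨(j : ℕ), by omega⟩ * (0:ℝ))) = 0 := by
      refine Finset.sum_eq_zero fun j _ => ?_
      have hne : (⟨(j : ℕ), by omega⟩ : Fin (m+4)) ≠ ⟨m+2, by omega⟩ := by
        simp only [ne_eq, Fin.mk.injEq]
        omega
      simp [Pi.single_eq_of_ne hne]
    rw [hs] at h
    simp only [D2, D3, e2, e3, Pi.zero_apply, mul_zero, zero_mul, add_zero, zero_add,
      sub_zero, zero_sub, mul_one] at h
    linarith [h]
  have hm3 : 2*tt m p*(yy m p + bb m p) * v.2.1
      + (yy m p^2 + 2*bb m p*yy m p) * v.2.2 ⟨0, by omega⟩ = 0 := by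
    have h := hv (((Pi.single (⟨m+3, by omega⟩ : Fin (m+4)) (1:ℝ) : Fin (m+4) → ℝ), 0, 0) : E m)
    rw [Bform] at h
    dsimp only at h
    simp only [Pi.zero_apply] at h
    have e2 : (Pi.single (⟨m+3, by omega⟩ : Fin (m+4)) (1:ℝ) : Fin (m+4) → ℝ) ⟨m+2, by omega⟩ = 0 :=
      Pi.single_eq_of_ne (by simp only [ne_eq, Fin.mk.injEq]; omega) _
    have e3 : (Pi.single (⟨m+3, by omega⟩ : Fin (m+4)) (1:ℝ) : Fin (m+4) → ℝ) ⟨m+3, by omega⟩ = 1 :=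
      Pi.single_eq_same _ _
    have hs : (∑ j : Fin (m+2),
        (v.2.2 j * (Pi.single (⟨m+3, by omega⟩ : Fin (m+4)) (1:ℝ) : Fin (m+4) → ℝ) ⟨(j : ℕ), by omega⟩
          - v.1 ⟨(j : ℕ), by omega⟩ * (0:ℝ))) = 0 := by
      refine Finset.sum_eq_zero fun j _ => ?_
      have hne : (⟨(j : ℕ), by omega⟩ : Fin (m+4)) ≠ ⟨m+3, by omega⟩ := by
        simp only [ne_eq, Fin.mk.injEq]
        omega
      simp [Pi.single_eq_of_ne hne]
    rw [hs] at h
    simp only [D2, D3, e2, e3, Pi.zero_apply, mul_zero, zero_mul, add_zero, zero_add,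
      sub_zero, zero_sub, mul_one] at h
    linarith [h]
  have hy : aa m p * tt m p * v.1 ⟨m+2, by omega⟩
      - (yy m p + bb m p) * tt m p * v.1 ⟨m+3, by omega⟩ = 0 := by
    have h := hv ((0, 1, 0) : E m)
    rw [Bform] at h
    dsimp only at h
    simp only [Pi.zero_apply] at h
    have hs : (∑ j : Fin (m+2),
        (v.2.2 j * (0:ℝ) - v.1 ⟨(j : ℕ), by omega⟩ * (0:ℝ))) = 0 := by
      refine Finset.sum_eq_zero fun j _ => by simp
    rw [hs] at h
    simp only [D2, D3, Pi.zero_apply, mul_zero, zero_mul, add_zero, zero_add,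
      sub_zero, zero_sub, mul_one] at h
    linarith [h]
  refine ⟨hx, fun k hk => ?_, ?_, hm2, hm3, hy⟩
  · have h := hθ k
    have hne : (⟨0, by omega⟩ : Fin (m+2)) ≠ k :=
      fun hh => hk (by simpa using congrArg Fin.val hh.symm)
    rw [Pi.single_eq_of_ne hne] at h
    simpa using h
  · have h := hθ ⟨0, by omega⟩
    rw [Pi.single_eq_same] at h
    simpa using h

end S11
namespace S11
variable (m : ℕ)

lemma finrank_E : Module.finrank ℝ (E m) = 2*m+7 := by
  rw [Module.finrank_prod, Module.finrank_prod, Module.finrank_pi, Module.finrank_pi,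
    Module.finrank_self]
  simp [Fintype.card_fin]
  omega

lemma smul_kv (c c1 r1 s1 μ1 : ℝ) :
    c • kv m c1 r1 s1 μ1 = kv m (c*c1) (c*r1) (c*s1) (c*μ1) := by
  simp only [kv, Prod.smul_mk, smul_zero, smul_eq_mul]
  refine congrArg₂ Prod.mk ?_ rfl
  funext j
  simp [xvec, Pi.smul_apply, mul_ite]

lemma add_kv (c1 r1 s1 μ1 c2 r2 s2 μ2 : ℝ) :
    kv m c1 r1 s1 μ1 + kv m c2 r2 s2 μ2 = kv m (c1+c2) (r1+r2) (s1+s2) (μ1+μ2) := by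
  simp only [kv, Prod.mk_add_mk, add_zero]
  refine congrArg₂ Prod.mk ?_ rfl
  funext j
  simp only [Pi.add_apply, xvec]
  split_ifs <;> simp

lemma vec_ext (v : E m) (c r s μ : ℝ)
    (h0 : v.1 ⟨0, by omega⟩ = c) (h2 : v.1 ⟨m+2, by omega⟩ = r)
    (h3 : v.1 ⟨m+3, by omega⟩ = s)
    (hg : ∀ k : Fin (m+2), (k : ℕ) ≠ 0 → v.1 ⟨(k : ℕ), by omega⟩ = 0)
    (hy : v.2.1 = μ) (hθ : ∀ k, v.2.2 k = 0) :
    v = kv m c r s μ := by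
  obtain ⟨v1, vy, vθ⟩ := v
  simp only [kv, Prod.mk.injEq]
  refine ⟨?_, hy, funext fun k => hθ k⟩
  funext j
  rcases j with ⟨jv, hj⟩
  by_cases e0 : jv = 0
  · subst e0; rw [xvec_at0]; exact h0
  · by_cases e2 : jv = m+2
    · subst e2; rw [xvec_atm2]; exact h2
    · by_cases e3 : jv = m+3
      · subst e3; rw [xvec_atm3]; exact h3
      · rw [xvec_other m c r s ⟨jv, hj⟩ e0 e2 e3]
        exact hg ⟨jv, by omega⟩ e0

lemma rank_noncrit (hn : 4 ≤ m+4) (p : E m) (ht : tt m p ≠ 0)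
    (hab : ¬(aa m p = 0 ∧ yy m p + bb m p = 0)) :
    Module.finrank ℝ (LinearMap.range ((sympForm (m+4)).compl₁₂
      (fderiv ℝ (piLs (m+4) hn) p).toLinearMap
      (fderiv ℝ (piLs (m+4) hn) p).toLinearMap)) = 2*m+6 := by
  set B := (sympForm (m+4)).compl₁₂ (fderiv ℝ (piLs (m+4) hn) p).toLinearMap
      (fderiv ℝ (piLs (m+4) hn) p).toLinearMap with hB
  set v0 : E m := kv m (aa m p * yy m p^2) (yy m p + bb m p) (aa m p) 0 with hv0def
  have hv0ne : v0 ≠ 0 := by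
    intro h
    apply hab
    have h2 := congrFun (congrArg Prod.fst h) ⟨m+2, by omega⟩
    have h3 := congrFun (congrArg Prod.fst h) ⟨m+3, by omega⟩
    simp only [hv0def, kv, xvec_atm2, xvec_atm3, Prod.fst_zero, Pi.zero_apply] at h2 h3
    exact ⟨h3, h2⟩
  have hker : LinearMap.ker B = Submodule.span ℝ {v0} := by
    apply le_antisymm
    · intro v hvmem
      rw [LinearMap.mem_ker] at hvmem
      have hv : ∀ w, B v w = 0 := fun w => by rw [hvmem]; rfl
      obtain ⟨hx, hgen, h0, hm2, hm3, hyw⟩ := ker_eqs m hn p v hv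
      have hθ0 : v.2.2 ⟨0, by omega⟩ = 0 := hx _
      rw [hθ0, mul_zero, add_zero] at hm2 hm3
      have hvya : aa m p * v.2.1 = 0 := by
        rcases mul_eq_zero.mp (show (aa m p * v.2.1) * tt m p = 0 by linarith [hm2]; ) with h | h
        · exact h
        · exact absurd h ht
      have hvyb : (yy m p + bb m p) * v.2.1 = 0 := by
        rcases mul_eq_zero.mp (show ((yy m p + bb m p) * v.2.1) * tt m p = 0 by
          linarith [hm3]) with h | h
        · exact h
        · exact absurd h ht
      have hvy : v.2.1 = 0 := by
        by_cases ha : aa m p = 0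
        · have hyb : yy m p + bb m p ≠ 0 := fun h => hab ⟨ha, h⟩
          rcases mul_eq_zero.mp hvyb with h | h
          · exact absurd h hyb
          · exact h
        · rcases mul_eq_zero.mp hvya with h | h
          · exact absurd h ha
          · exact h
      have hrel : aa m p * v.1 ⟨m+2, by omega⟩ = (yy m p + bb m p) * v.1 ⟨m+3, by omega⟩ := by
        have : (aa m p * v.1 ⟨m+2, by omega⟩ - (yy m p + bb m p) * v.1 ⟨m+3, by omega⟩)
            * tt m p = 0 := by linarith [hyw]
        rcases mul_eq_zero.mp this with h | h
        · linarith
        · exact absurd h ht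
      rw [Submodule.mem_span_singleton]
      have key : ∀ c : ℝ, c * (yy m p + bb m p) = v.1 ⟨m+2, by omega⟩ →
          c * aa m p = v.1 ⟨m+3, by omega⟩ → c • v0 = v := by
        intro c hc2 hc3
        rw [hv0def, smul_kv, mul_zero]
        refine (vec_ext m v _ _ _ _ ?_ hc2.symm hc3.symm hgen hvy hx).symm
        rw [h0, ← hc2, ← hc3]; ring
      by_cases ha : aa m p = 0
      · have hyb : yy m p + bb m p ≠ 0 := fun h => hab ⟨ha, h⟩
        have h3z : v.1 ⟨m+3, by omega⟩ = 0 := by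
          rw [ha, zero_mul] at hrel
          rcases mul_eq_zero.mp hrel.symm with h | h
          · exact absurd h hyb
          · exact h
        refine ⟨v.1 ⟨m+2, by omega⟩ / (yy m p + bb m p), key _ ?_ ?_⟩
        · field_simp
        · rw [ha, mul_zero, h3z]
      · refine ⟨v.1 ⟨m+3, by omega⟩ / aa m p, key _ ?_ ?_⟩
        · field_simp
          linarith [hrel]
        · field_simp
    · rw [Submodule.span_le, Set.singleton_subset_iff, SetLike.mem_coe, LinearMap.mem_ker]
      refine LinearMap.ext fun w => ?_
      simp only [LinearMap.zero_apply]
      exact (BV m hn p _ _ _ _ w).trans (by ring)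
  have h1 : Module.finrank ℝ ↥(Submodule.span ℝ ({v0} : Set (E m))) = 1 :=
    finrank_span_singleton hv0ne
  have hrn := LinearMap.finrank_range_add_finrank_ker B
  rw [hker] at hrn
  have hrn' : Module.finrank ℝ ↥(LinearMap.range B)
      + Module.finrank ℝ ↥(Submodule.span ℝ ({v0} : Set (E m)))
      = Module.finrank ℝ (E m) := hrn
  rw [h1, finrank_E] at hrn'
  omega

lemma rank_crit (hn : 4 ≤ m+4) (p : E m) (ht : tt m p ≠ 0)
    (ha : aa m p = 0) (hb : bb m p + yy m p = 0) :
    Module.finrank ℝ (LinearMap.range ((sympForm (m+4)).compl₁₂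
      (fderiv ℝ (piLs (m+4) hn) p).toLinearMap
      (fderiv ℝ (piLs (m+4) hn) p).toLinearMap)) = 2*m+4 := by
  set B := (sympForm (m+4)).compl₁₂ (fderiv ℝ (piLs (m+4) hn) p).toLinearMap
      (fderiv ℝ (piLs (m+4) hn) p).toLinearMap with hB
  have hyb : yy m p = - bb m p := by linarith
  set v1 : E m := kv m (bb m p^2) 0 1 0 with hv1def
  set v2 : E m := kv m 0 1 0 0 with hv2def
  set v3 : E m := kv m 0 0 0 1 with hv3def
  have hker : LinearMap.ker B = Submodule.span ℝ (Set.range ![v1, v2, v3]) := by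
    apply le_antisymm
    · intro v hvmem
      rw [LinearMap.mem_ker] at hvmem
      have hv : ∀ w, B v w = 0 := fun w => by rw [hvmem]; rfl
      obtain ⟨hx, hgen, h0, hm2, hm3, hyw⟩ := ker_eqs m hn p v hv
      rw [Submodule.mem_span_range_iff_exists_fun]
      refine ⟨![v.1 ⟨m+3, by omega⟩, v.1 ⟨m+2, by omega⟩, v.2.1], ?_⟩
      rw [Fin.sum_univ_three]
      simp only [Matrix.cons_val_zero, Matrix.cons_val_one, Matrix.head_cons,
        Matrix.cons_val_two, Matrix.tail_cons]
      rw [hv1def, hv2def, hv3def, smul_kv, smul_kv, smul_kv, add_kv, add_kv]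
      refine (vec_ext m v _ _ _ _ ?_ ?_ ?_ hgen ?_ hx).symm
      · rw [h0, ha, hyb]; ring
      · ring
      · ring
      · ring
    · rw [Submodule.span_le]
      rintro x ⟨i, rfl⟩
      rw [SetLike.mem_coe, LinearMap.mem_ker]
      fin_cases i <;>
        · refine LinearMap.ext fun w => ?_
          simp only [Matrix.cons_val_zero, Matrix.cons_val_one, Matrix.head_cons,
            Matrix.cons_val_two, Matrix.tail_cons, LinearMap.zero_apply]
          refine (BV m hn p _ _ _ _ w).trans ?_
          rw [ha, hyb]
          ring
  have hli : LinearIndependent ℝ ![v1, v2, v3] := by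
    rw [Fintype.linearIndependent_iff]
    intro g hg
    rw [Fin.sum_univ_three] at hg
    simp only [Matrix.cons_val_zero, Matrix.cons_val_one, Matrix.head_cons,
      Matrix.cons_val_two, Matrix.tail_cons] at hg
    rw [hv1def, hv2def, hv3def, smul_kv, smul_kv, smul_kv, add_kv, add_kv] at hg
    have e3 := congrFun (congrArg Prod.fst hg) ⟨m+3, by omega⟩
    have e2 := congrFun (congrArg Prod.fst hg) ⟨m+2, by omega⟩
    have ey := congrArg (fun z : E m => z.2.1) hg
    simp only [kv, xvec_atm2, xvec_atm3, Prod.fst_zero, Pi.zero_apply] at e3 e2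
    simp only [kv] at ey
    have hg0 : g 0 = 0 := by linarith [e3]
    have hg1 : g 1 = 0 := by linarith [e2]
    have hg2 : g 2 = 0 := by
      have : g 0 * 0 + g 1 * 0 + g 2 * 1 = 0 := ey
      linarith
    intro i
    fin_cases i
    · exact hg0
    · exact hg1
    · exact hg2
  have hcard : Module.finrank ℝ ↥(Submodule.span ℝ
      (Set.range (![v1, v2, v3] : Fin 3 → E m))) = 3 :=
    (finrank_span_eq_card hli).trans (by simp)
  have hrn := LinearMap.finrank_range_add_finrank_ker B
  rw [hker] at hrn
  have hrn' : Module.finrank ℝ ↥(LinearMap.range B)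
      + Module.finrank ℝ ↥(Submodule.span ℝ (Set.range (![v1, v2, v3] : Fin 3 → E m)))
      = Module.finrank ℝ (E m) := hrn
  rw [hcard, finrank_E] at hrn'
  omega

end S11

/-- (i) for every `p`, the pullbacks under `Dπ_L(p)` and `Dπ_R(p)` of the
two canonical symplectic forms agree (the coordinate-free form of
`Dπ_Lᵀ J_n Dπ_L = Dπ_Rᵀ J_{n-1} Dπ_R`), and this common bilinear form is antisymmetric;
(ii) for `θ₁ ≠ 0`, this common antisymmetric form has rank `2n-2` when
`(x_{n-1}, x_n + y_{n-1}) ≠ (0, 0)` and rank `2n-4` when `x_{n-1} = 0` and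
`x_n + y_{n-1} = 0`. -/
theorem stmt_11 (n : ℕ) (hn : 4 ≤ n) :
    -- (i)
    (∀ p : (Fin n → ℝ) × ℝ × (Fin (n - 2) → ℝ),
      (sympForm n).compl₁₂ (fderiv ℝ (piLs n hn) p).toLinearMap
          (fderiv ℝ (piLs n hn) p).toLinearMap =
        (sympForm (n - 1)).compl₁₂ (fderiv ℝ (piRs n hn) p).toLinearMap
          (fderiv ℝ (piRs n hn) p).toLinearMap ∧
      (∀ u v : (Fin n → ℝ) × ℝ × (Fin (n - 2) → ℝ),
        (sympForm n).compl₁₂ (fderiv ℝ (piLs n hn) p).toLinearMap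
            (fderiv ℝ (piLs n hn) p).toLinearMap u v =
          -((sympForm n).compl₁₂ (fderiv ℝ (piLs n hn) p).toLinearMap
              (fderiv ℝ (piLs n hn) p).toLinearMap v u))) ∧
    -- (ii)
    (∀ p : (Fin n → ℝ) × ℝ × (Fin (n - 2) → ℝ), p.2.2 ⟨0, by omega⟩ ≠ 0 →
      ((p.1 ⟨n - 2, by omega⟩, p.1 ⟨n - 1, by omega⟩ + p.2.1) ≠ ((0 : ℝ), (0 : ℝ)) →
        Module.finrank ℝ
          (LinearMap.range ((sympForm n).compl₁₂ (fderiv ℝ (piLs n hn) p).toLinearMap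
            (fderiv ℝ (piLs n hn) p).toLinearMap)) = 2 * n - 2) ∧
      (p.1 ⟨n - 2, by omega⟩ = 0 → p.1 ⟨n - 1, by omega⟩ + p.2.1 = 0 →
        Module.finrank ℝ
          (LinearMap.range ((sympForm n).compl₁₂ (fderiv ℝ (piLs n hn) p).toLinearMap
            (fderiv ℝ (piLs n hn) p).toLinearMap)) = 2 * n - 4)) := by
  obtain ⟨m, rfl⟩ : ∃ m, n = m + 4 := ⟨n - 4, by omega⟩
  refine ⟨fun p => ⟨?_, ?_⟩, fun p hθ => ⟨fun hne => ?_, fun h1 h2 => ?_⟩⟩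
  · exact LinearMap.ext fun u => LinearMap.ext fun v => S11.formsAgree m hn p u v
  · intro u v
    exact S11.skew (m+4) ((fderiv ℝ (piLs (m+4) hn) p).toLinearMap u)
      ((fderiv ℝ (piLs (m+4) hn) p).toLinearMap v)
  · have hab : ¬(S11.aa m p = 0 ∧ S11.yy m p + S11.bb m p = 0) := by
      rintro ⟨ha, hyb⟩
      apply hne
      have h1' : p.1 ⟨m+4-2, by omega⟩ = 0 := ha
      have h2' : p.1 ⟨m+4-1, by omega⟩ + p.2.1 = 0 := by
        show p.1 ⟨m+3, by omega⟩ + p.2.1 = 0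
        have := hyb
        simp only [S11.yy, S11.bb] at this
        linarith
      rw [Prod.mk.injEq]
      exact ⟨h1', h2'⟩
    rw [show 2*(m+4)-2 = 2*m+6 by omega]
    exact S11.rank_noncrit m hn p hθ hab
  · rw [show 2*(m+4)-4 = 2*m+4 by omega]
    have ha : S11.aa m p = 0 := h1
    have hb : S11.bb m p + S11.yy m p = 0 := h2
    exact S11.rank_crit m hn p hθ ha hb
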